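/- Let H be a real Hilbert space, Γ ⊆ H totally bounded, and f in the closed linear span H_Γ of Γ. Suppose (g_n)_{n∈ℕ} is a sequence in Γ such that Λ_n := {g_1,…,g_n} is linearly independent for every n and the f/P-greedy selection rule holds: |⟪f − I_{Λ_n}(f), g_{n+1}⟫| / P_{Λ_n}(g_{n+1}) = sup_{g∈Γ, P_{Λ_n}(g)>0} |⟪f − I_{Λ_n}(f), g⟫| / P_{Λ_n}(g) for every n. Then ‖f − I_{Λ_n}(f)‖ → 0 as n → ∞. -/

import Mathlib

/-
Let `r n = f - I_{Λ n} f` and let `a n` be the maximal ratio attained by `g n`; it equals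
`|⟪r n, e⟫|` for the normalised component `e` of `g n` orthogonal to `span Λ n`, so projecting
onto the larger span `Λ (n + 1)` gives `‖r (n + 1)‖² ≤ ‖r n‖² - (a n)²` and hence `a n → 0`.
Since `P_{Λ n}(γ) ≤ ‖γ‖`, the selection rule yields `|⟪r n, γ⟫| ≤ a n * ‖γ‖` on `Γ`, so the
functionals `⟪r n, ·⟫` tend to zero pointwise on `Γ`, hence on its span, and, being uniformly
bounded by `‖f‖`, on the closure of the span. At `f` this reads `‖r n‖² = ⟪r n, f⟫ → 0`.
-/

open Filter
open scoped RealInnerProductSpace ENNReal Topology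

/-- Generalized interpolation operator: orthogonal projection onto the span of `Λ`. -/
noncomputable def interp {H : Type*} [NormedAddCommGroup H] [InnerProductSpace ℝ H]
    (Λ : Finset H) (f : H) : H :=
  haveI : FiniteDimensional ℝ (Submodule.span ℝ (Λ : Set H)) :=
    FiniteDimensional.span_of_finite ℝ Λ.finite_toSet
  ((Submodule.span ℝ (Λ : Set H)).orthogonalProjection f : H)

/-- Generalized power function: distance from `g` to the span of `Λ`. -/
noncomputable def powerFn {H : Type*} [NormedAddCommGroup H] [InnerProductSpace ℝ H]
    (Λ : Finset H) (g : H) : ℝ := ‖g - interp Λ g‖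

open scoped NNReal

lemma tendsto_zero_of_tendsto_sq {ι : Type*} {l : Filter ι} {x : ι → ℝ}
    (h : Tendsto (fun i => x i ^ 2) l (𝓝 0)) : Tendsto x l (𝓝 0) := by
  rw [tendsto_zero_iff_abs_tendsto_zero]
  simpa [Function.comp_def, Real.sqrt_sq_eq_abs] using h.sqrt

lemma tendsto_zero_of_add_sq_le {u a : ℕ → ℝ} (hu : ∀ n, 0 ≤ u n)
    (h : ∀ n, u (n + 1) + a n ^ 2 ≤ u n) : Tendsto a atTop (𝓝 0) := by
  have hsum : ∀ N, ∑ k ∈ Finset.range N, a k ^ 2 + u N ≤ u 0 := by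
    intro N
    induction N with
    | zero => simp
    | succ N ih => rw [Finset.sum_range_succ]; linarith [h N]
  have hsummable : Summable fun n => a n ^ 2 :=
    summable_of_sum_range_le (fun n => sq_nonneg _) fun N => by linarith [hsum N, hu N]
  exact tendsto_zero_of_tendsto_sq hsummable.tendsto_atTop_zero

section InnerProductSpace

variable {H : Type*} [NormedAddCommGroup H] [InnerProductSpace ℝ H]

lemma tendsto_inner_of_mem_closure_span {ι : Type*} {l : Filter ι} {r : ι → H} {M : ℝ≥0}
    (hr : ∀ i, ‖r i‖ ≤ M) {Γ : Set H} (hΓ : ∀ γ ∈ Γ, Tendsto (fun i => ⟪r i, γ⟫) l (𝓝 0))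
    {x : H} (hx : x ∈ closure (Submodule.span ℝ Γ : Set H)) :
    Tendsto (fun i => ⟪r i, x⟫) l (𝓝 0) := by
  have hspan : ∀ y ∈ Submodule.span ℝ Γ, Tendsto (fun i => ⟪r i, y⟫) l (𝓝 0) := by
    intro y hy
    induction hy using Submodule.span_induction with
    | mem γ hγ => exact hΓ γ hγ
    | zero => simpa using tendsto_const_nhds
    | add y z _ _ hy hz => simpa [inner_add_right] using hy.add hz
    | smul c y _ hy => simpa [real_inner_smul_right] using hy.const_mul c
  have hlip : ∀ i, LipschitzWith M fun y => ⟪r i, y⟫ := fun i =>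
    LipschitzWith.of_dist_le_mul fun y z => by
      rw [Real.dist_eq, ← inner_sub_right, dist_eq_norm]
      exact (abs_real_inner_le_norm _ _).trans (by gcongr; exact hr i)
  exact ((LipschitzWith.uniformEquicontinuous _ M hlip).equicontinuous x).tendsto_of_mem_closure
    (f := fun _ => (0 : ℝ)) tendsto_const_nhds hspan hx

lemma interp_mem_span (Λ : Finset H) (f : H) : interp Λ f ∈ Submodule.span ℝ (Λ : Set H) :=
  Submodule.starProjection_apply_mem _ f

lemma inner_sub_interp_eq_zero (Λ : Finset H) (f : H) {v : H}
    (hv : v ∈ Submodule.span ℝ (Λ : Set H)) : ⟪f - interp Λ f, v⟫ = 0 :=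
  Submodule.starProjection_inner_eq_zero f v hv

lemma norm_sub_interp_le (Λ : Finset H) (f : H) {v : H}
    (hv : v ∈ Submodule.span ℝ (Λ : Set H)) : ‖f - interp Λ f‖ ≤ ‖f - v‖ := by
  rw [interp, ← Submodule.starProjection_apply, Submodule.starProjection_minimal]
  exact ciInf_le ⟨0, Set.forall_mem_range.2 fun _ => norm_nonneg _⟩
    (⟨v, hv⟩ : Submodule.span ℝ (Λ : Set H))

lemma norm_sub_interp_le_norm (Λ : Finset H) (f : H) : ‖f - interp Λ f‖ ≤ ‖f‖ := by
  simpa using norm_sub_interp_le Λ f (Submodule.zero_mem _)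

lemma norm_sub_interp_sq (Λ : Finset H) (f : H) : ‖f - interp Λ f‖ ^ 2 = ⟪f - interp Λ f, f⟫ := by
  have hsplit : ⟪f - interp Λ f, f⟫ = ⟪f - interp Λ f, (f - interp Λ f) + interp Λ f⟫ := by
    rw [sub_add_cancel]
  rw [hsplit, inner_add_right, inner_sub_interp_eq_zero Λ f (interp_mem_span Λ f), add_zero,
    real_inner_self_eq_norm_sq]

lemma inner_sub_interp_eq_zero_of_powerFn_eq_zero (Λ : Finset H) (f : H) {γ : H}
    (hγ : powerFn Λ γ = 0) : ⟪f - interp Λ f, γ⟫ = 0 := by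
  rw [powerFn, norm_eq_zero, sub_eq_zero] at hγ
  exact inner_sub_interp_eq_zero Λ f (hγ ▸ interp_mem_span Λ γ)

noncomputable def greedyRatio (Λ : Finset H) (f g : H) : ℝ :=
  |⟪f - interp Λ f, g⟫| / powerFn Λ g

lemma abs_inner_sub_interp_le_greedyRatio_mul_norm {Λ : Finset H} {f g₀ γ : H}
    (hmax : 0 < powerFn Λ γ → greedyRatio Λ f γ ≤ greedyRatio Λ f g₀) :
    |⟪f - interp Λ f, γ⟫| ≤ greedyRatio Λ f g₀ * ‖γ‖ := by
  have hratio_nonneg : 0 ≤ greedyRatio Λ f g₀ := div_nonneg (abs_nonneg _) (norm_nonneg _)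
  rcases (norm_nonneg _ : 0 ≤ powerFn Λ γ).eq_or_lt with hzero | hpos
  · rw [inner_sub_interp_eq_zero_of_powerFn_eq_zero Λ f hzero.symm, abs_zero]
    exact mul_nonneg hratio_nonneg (norm_nonneg γ)
  · calc |⟪f - interp Λ f, γ⟫| ≤ greedyRatio Λ f g₀ * powerFn Λ γ :=
          (div_le_iff₀ hpos).1 (hmax hpos)
      _ ≤ greedyRatio Λ f g₀ * ‖γ‖ := by gcongr; exact norm_sub_interp_le_norm Λ γ

/-- The competitor `I_Λ f + t • (g - I_Λ g) ∈ span Λ'`, with `t = ⟪r, g⟫ / P_Λ(g)²`, lies at squared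
distance exactly `‖r‖² - (greedyRatio Λ f g)²` from `f`; this also holds when `P_Λ(g) = 0`, where
`t = 0` and the ratio is `0`. -/
lemma norm_sub_interp_sq_add_greedyRatio_sq_le {Λ Λ' : Finset H} (hΛ : Λ ⊆ Λ') {g : H}
    (hg : g ∈ Λ') (f : H) :
    ‖f - interp Λ' f‖ ^ 2 + greedyRatio Λ f g ^ 2 ≤ ‖f - interp Λ f‖ ^ 2 := by
  set r := f - interp Λ f
  set u := g - interp Λ g
  set p := powerFn Λ g
  set t := ⟪r, g⟫ / p ^ 2
  have hspan : Submodule.span ℝ (Λ : Set H) ≤ Submodule.span ℝ (Λ' : Set H) :=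
    Submodule.span_mono (by exact_mod_cast hΛ)
  have hmem : interp Λ f + t • u ∈ Submodule.span ℝ (Λ' : Set H) :=
    Submodule.add_mem _ (hspan (interp_mem_span Λ f)) <| Submodule.smul_mem _ _ <|
      Submodule.sub_mem _ (Submodule.subset_span (by exact_mod_cast hg))
        (hspan (interp_mem_span Λ g))
  have hru : ⟪r, u⟫ = ⟪r, g⟫ := by
    rw [inner_sub_right, inner_sub_interp_eq_zero Λ f (interp_mem_span Λ g), sub_zero]
  have hcompetitor : ‖r - t • u‖ ^ 2 = ‖r‖ ^ 2 - ⟪r, g⟫ ^ 2 / p ^ 2 := by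
    have hu : ‖u‖ = p := rfl
    rw [norm_sub_sq_real, real_inner_smul_right, norm_smul, hru, hu, Real.norm_eq_abs, mul_pow,
      sq_abs]
    rcases eq_or_ne p 0 with hp | hp
    · simp [t, hp]
    · simp only [t]
      field_simp
      ring
  have hratio : greedyRatio Λ f g ^ 2 = ⟪r, g⟫ ^ 2 / p ^ 2 := by
    rw [greedyRatio, div_pow, sq_abs]
  calc ‖f - interp Λ' f‖ ^ 2 + greedyRatio Λ f g ^ 2
      ≤ ‖f - (interp Λ f + t • u)‖ ^ 2 + greedyRatio Λ f g ^ 2 := by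
        gcongr; exact norm_sub_interp_le Λ' f hmem
    _ = ‖r‖ ^ 2 := by rw [← sub_sub, hcompetitor, hratio]; ring

end InnerProductSpace

theorem stmt_14_general {H : Type*} [NormedAddCommGroup H] [InnerProductSpace ℝ H]
    [DecidableEq H] (Γ : Set H)
    (f : H) (hf : f ∈ closure (Submodule.span ℝ Γ : Set H))
    (g : ℕ → H)
    (hgreedy : ∀ (n : ℕ), ∀ γ ∈ Γ, 0 < powerFn ((Finset.range n).image g) γ →
      |⟪f - interp ((Finset.range n).image g) f, γ⟫| /
          powerFn ((Finset.range n).image g) γ ≤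
        |⟪f - interp ((Finset.range n).image g) f, g n⟫| /
          powerFn ((Finset.range n).image g) (g n)) :
    Tendsto (fun n => ‖f - interp ((Finset.range n).image g) f‖) atTop (𝓝 0) := by
  set Λ : ℕ → Finset H := fun n => (Finset.range n).image g
  have hratio : Tendsto (fun n => greedyRatio (Λ n) f (g n)) atTop (𝓝 0) :=
    tendsto_zero_of_add_sq_le (fun n => sq_nonneg ‖f - interp (Λ n) f‖) fun n =>
      norm_sub_interp_sq_add_greedyRatio_sq_le
        (Finset.image_subset_image (Finset.range_subset_range.2 n.le_succ))
        (Finset.mem_image_of_mem g (Finset.self_mem_range_succ n)) f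
  have hΓ : ∀ γ ∈ Γ, Tendsto (fun n => ⟪f - interp (Λ n) f, γ⟫) atTop (𝓝 0) := fun γ hγ =>
    squeeze_zero_norm (fun n => abs_inner_sub_interp_le_greedyRatio_mul_norm (hgreedy n γ hγ))
      (by simpa using hratio.mul_const ‖γ‖)
  have hf' : Tendsto (fun n => ⟪f - interp (Λ n) f, f⟫) atTop (𝓝 0) :=
    tendsto_inner_of_mem_closure_span (M := ‖f‖₊) (fun n => norm_sub_interp_le_norm (Λ n) f) hΓ hf
  exact tendsto_zero_of_tendsto_sq (by simpa only [norm_sub_interp_sq] using hf')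

/-- convergence of the `f/P`-greedy algorithm on a totally bounded set `Γ`.
The sequence is `0`-indexed: `Λ n = {g_0, …, g_{n-1}}`, and the selection rule states that
`g_n` maximizes the ratio `γ ↦ |⟪f - I_{Λ n}(f), γ⟫| / P_{Λ n}(γ)` over all `γ ∈ Γ` with
`P_{Λ n}(γ) > 0`. -/
theorem stmt_14 {H : Type*} [NormedAddCommGroup H] [InnerProductSpace ℝ H] [CompleteSpace H]
    [DecidableEq H] (Γ : Set H) (hΓ : TotallyBounded Γ)
    (f : H) (hf : f ∈ closure (Submodule.span ℝ Γ : Set H))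
    (g : ℕ → H) (hmem : ∀ n, g n ∈ Γ)
    (hli : ∀ n, LinearIndependent (ι := (((Finset.range n).image g : Finset H) : Set H))
      ℝ Subtype.val)
    (hgreedy : ∀ (n : ℕ), ∀ γ ∈ Γ, 0 < powerFn ((Finset.range n).image g) γ →
      |⟪f - interp ((Finset.range n).image g) f, γ⟫| /
          powerFn ((Finset.range n).image g) γ ≤
        |⟪f - interp ((Finset.range n).image g) f, g n⟫| /
          powerFn ((Finset.range n).image g) (g n)) :
    Tendsto (fun n => ‖f - interp ((Finset.range n).image g) f‖) atTop (𝓝 0) :=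
  stmt_14_general Γ f hf g hgreedy
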